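/- arXiv:2403.01227 — 5 statements merged into one kernel-verified Lean document; each statement's English description precedes it below -/
import Mathlib

section
/- Let B̄ be an invertible symmetric real 3×3 matrix, let (n, a, b) be an orthonormal triad of vectors in ℝ³ (n·n = a·a = b·b = 1, n·a = n·b = a·b = 0), and let f′, g′ be real numbers. Set B = (I + f′ a⊗n + g′ b⊗n) B̄ (I + f′ n⊗a + g′ n⊗b). Then B is invertible with B⁻¹ = (I − f′ n⊗a − g′ n⊗b) B̄⁻¹ (I − f′ a⊗n − g′ b⊗n), and trace B⁻¹ = trace B̄⁻¹ − 2(f′ n·(B̄⁻¹a) + g′ n·(B̄⁻¹b)) + f′² a·(B̄⁻¹a) + g′² b·(B̄⁻¹b) + 2 f′ g′ a·(B̄⁻¹b). (This is the formula for the second principal invariant I₂ of the motion.) -/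
/-!
Write `w = f' a + g' b`, so that `B = (1 + w ⊗ n) B̄ (1 + w ⊗ n)ᵀ` with `n · w = 0`. The rank-one
matrix `w ⊗ n` is then nilpotent, so `1 + w ⊗ n` has inverse `1 - w ⊗ n`, which inverts the
conjugation. Multiplying out `(1 - n ⊗ w) B̄⁻¹ (1 - w ⊗ n)` leaves four rank-≤1 terms, so with
`B̄⁻¹` symmetric and `n · n = 1` its trace is `trace B̄⁻¹ - 2 n · B̄⁻¹ w + w · B̄⁻¹ w`; expanding
`w` gives the formula.
-/

open Matrix

namespace Matrix

variable {m R : Type*} [Fintype m] [CommRing R]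

lemma IsSymm.dotProduct_mulVec_comm {A : Matrix m m R} (hA : A.IsSymm) (u v : m → R) :
    u ⬝ᵥ A *ᵥ v = v ⬝ᵥ A *ᵥ u := by
  rw [dotProduct_mulVec, ← mulVec_transpose, hA.eq, dotProduct_comm]

variable [DecidableEq m]

lemma one_add_vecMulVec_mul_one_sub_vecMulVec {u v : m → R} (h : v ⬝ᵥ u = 0) :
    (1 + vecMulVec u v) * (1 - vecMulVec u v) = 1 := by
  rw [add_mul, one_mul, mul_sub, mul_one, vecMulVec_mul_vecMulVec, h, zero_smul, vecMulVec_zero,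
    sub_zero, sub_add_cancel]

lemma trace_one_sub_vecMulVec_mul_mul_one_sub_vecMulVec (C : Matrix m m R) (u v : m → R) :
    ((1 - vecMulVec v u) * C * (1 - vecMulVec u v)).trace =
      C.trace - u ⬝ᵥ C *ᵥ v - v ⬝ᵥ C *ᵥ u + (u ⬝ᵥ C *ᵥ u) * (v ⬝ᵥ v) := by
  have hexpand : (1 - vecMulVec v u) * C * (1 - vecMulVec u v) =
      C - vecMulVec v (u ᵥ* C) - vecMulVec (C *ᵥ u) v + (u ⬝ᵥ C *ᵥ u) • vecMulVec v v := by
    rw [sub_mul, one_mul, vecMulVec_mul, mul_sub, mul_one, sub_mul, mul_vecMulVec,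
      vecMulVec_mul_vecMulVec, ← dotProduct_mulVec, vecMulVec_smul]
    abel
  rw [hexpand, trace_add, trace_sub, trace_sub, trace_smul, trace_vecMulVec, trace_vecMulVec,
    trace_vecMulVec, dotProduct_comm v, ← dotProduct_mulVec, dotProduct_comm (C *ᵥ u), smul_eq_mul]

lemma one_add_vecMulVec_conj_mul_inv {M : Matrix m m R} (hM : IsUnit M.det) {u v : m → R}
    (h : v ⬝ᵥ u = 0) :
    (1 + vecMulVec u v) * M * (1 + vecMulVec v u) *
      ((1 - vecMulVec v u) * M⁻¹ * (1 - vecMulVec u v)) = 1 := by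
  have hvu : (1 + vecMulVec v u) * (1 - vecMulVec v u) = 1 :=
    one_add_vecMulVec_mul_one_sub_vecMulVec (by rwa [dotProduct_comm])
  calc (1 + vecMulVec u v) * M * (1 + vecMulVec v u) *
        ((1 - vecMulVec v u) * M⁻¹ * (1 - vecMulVec u v))
      = (1 + vecMulVec u v) * (M * ((1 + vecMulVec v u) * (1 - vecMulVec v u)) * M⁻¹) *
          (1 - vecMulVec u v) := by simp only [Matrix.mul_assoc]
    _ = 1 := by
      rw [hvu, mul_one, mul_nonsing_inv M hM, mul_one, one_add_vecMulVec_mul_one_sub_vecMulVec h]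

end Matrix

theorem inv_and_trace_inv_B_formula_general
    (Bbar : Matrix (Fin 3) (Fin 3) ℝ) (hB : Bbar.IsSymm)
    (hBinv : IsUnit Bbar.det)
    (n a b : Fin 3 → ℝ)
    (hnn : n ⬝ᵥ n = 1)
    (hna : n ⬝ᵥ a = 0) (hnb : n ⬝ᵥ b = 0)
    (f' g' : ℝ) :
    IsUnit ((1 + f' • vecMulVec a n + g' • vecMulVec b n) * Bbar *
      (1 + f' • vecMulVec n a + g' • vecMulVec n b)).det ∧
    ((1 + f' • vecMulVec a n + g' • vecMulVec b n) * Bbar *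
      (1 + f' • vecMulVec n a + g' • vecMulVec n b))⁻¹ =
      (1 - f' • vecMulVec n a - g' • vecMulVec n b) * Bbar⁻¹ *
        (1 - f' • vecMulVec a n - g' • vecMulVec b n) ∧
    ((1 + f' • vecMulVec a n + g' • vecMulVec b n) * Bbar *
      (1 + f' • vecMulVec n a + g' • vecMulVec n b))⁻¹.trace =
      Bbar⁻¹.trace
        - 2 * (f' * (n ⬝ᵥ Bbar⁻¹.mulVec a) + g' * (n ⬝ᵥ Bbar⁻¹.mulVec b))
        + f' ^ 2 * (a ⬝ᵥ Bbar⁻¹.mulVec a)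
        + g' ^ 2 * (b ⬝ᵥ Bbar⁻¹.mulVec b)
        + 2 * f' * g' * (a ⬝ᵥ Bbar⁻¹.mulVec b) := by
  set w := f' • a + g' • b
  have hwn : f' • vecMulVec a n + g' • vecMulVec b n = vecMulVec w n := by
    rw [add_vecMulVec, smul_vecMulVec, smul_vecMulVec]
  have hnw : f' • vecMulVec n a + g' • vecMulVec n b = vecMulVec n w := by
    rw [vecMulVec_add, vecMulVec_smul, vecMulVec_smul]
  have hnw_zero : n ⬝ᵥ w = 0 := by simp [w, dotProduct_add, hna, hnb]
  have hinv := one_add_vecMulVec_conj_mul_inv hBinv hnw_zero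
  simp only [add_assoc, sub_sub, hwn, hnw]
  refine ⟨isUnit_det_of_right_inverse hinv, inv_eq_right_inv hinv, ?_⟩
  have hsymm := hB.inv.dotProduct_mulVec_comm
  rw [inv_eq_right_inv hinv, trace_one_sub_vecMulVec_mul_mul_one_sub_vecMulVec, hnn,
    hsymm w n]
  simp only [w, mulVec_add, mulVec_smul, dotProduct_add, dotProduct_smul, add_dotProduct,
    smul_dotProduct, smul_eq_mul]
  rw [hsymm b a]
  ring

/-- The inverse of the left Cauchy–Green tensor of the motion, and the second
principal invariant `I₂ = trace B⁻¹`. -/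
theorem inv_and_trace_inv_B_formula
    (Bbar : Matrix (Fin 3) (Fin 3) ℝ) (hB : Bbar.IsSymm)
    (hBinv : IsUnit Bbar.det)
    (n a b : Fin 3 → ℝ)
    (hnn : n ⬝ᵥ n = 1) (haa : a ⬝ᵥ a = 1) (hbb : b ⬝ᵥ b = 1)
    (hna : n ⬝ᵥ a = 0) (hnb : n ⬝ᵥ b = 0) (hab : a ⬝ᵥ b = 0)
    (f' g' : ℝ) :
    IsUnit ((1 + f' • vecMulVec a n + g' • vecMulVec b n) * Bbar *
      (1 + f' • vecMulVec n a + g' • vecMulVec n b)).det ∧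
    ((1 + f' • vecMulVec a n + g' • vecMulVec b n) * Bbar *
      (1 + f' • vecMulVec n a + g' • vecMulVec n b))⁻¹ =
      (1 - f' • vecMulVec n a - g' • vecMulVec n b) * Bbar⁻¹ *
        (1 - f' • vecMulVec a n - g' • vecMulVec b n) ∧
    ((1 + f' • vecMulVec a n + g' • vecMulVec b n) * Bbar *
      (1 + f' • vecMulVec n a + g' • vecMulVec n b))⁻¹.trace =
      Bbar⁻¹.trace
        - 2 * (f' * (n ⬝ᵥ Bbar⁻¹.mulVec a) + g' * (n ⬝ᵥ Bbar⁻¹.mulVec b))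
        + f' ^ 2 * (a ⬝ᵥ Bbar⁻¹.mulVec a)
        + g' ^ 2 * (b ⬝ᵥ Bbar⁻¹.mulVec b)
        + 2 * f' * g' * (a ⬝ᵥ Bbar⁻¹.mulVec b) :=
  inv_and_trace_inv_B_formula_general Bbar hB hBinv n a b hnn hna hnb f' g'
end

section
/- Let B̄ be an invertible symmetric real 3×3 matrix, let (n, a, b) be an orthonormal triad of vectors in ℝ³ (n·n = a·a = b·b = 1, n·a = n·b = a·b = 0), let f′, g′, p, W₁, W₂ be real numbers, set B = (I + f′ a⊗n + g′ b⊗n) B̄ (I + f′ n⊗a + g′ n⊗b), and let T = −p I + 2W₁ B − 2W₂ B⁻¹. Then the shear stress component b·(T n) equals 2W₁( n·(B̄b) + g′ n·(B̄n) ) − 2W₂( n·(B̄⁻¹b) − f′ b·(B̄⁻¹a) − g′ b·(B̄⁻¹b) ). -/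
open Matrix

private lemma vvmul (u v w x : Fin 3 → ℝ) :
    vecMulVec u v * vecMulVec w x = (v ⬝ᵥ w) • vecMulVec u x := by
  ext i j
  simp only [Matrix.mul_apply, vecMulVec_apply, Matrix.smul_apply, smul_eq_mul, dotProduct,
    Finset.sum_mul]
  exact Finset.sum_congr rfl fun k _ => by ring

private lemma vvmulVec (u v w : Fin 3 → ℝ) :
    (vecMulVec u v).mulVec w = (v ⬝ᵥ w) • u := by
  ext i
  simp only [Matrix.mulVec, vecMulVec_apply, dotProduct, Pi.smul_apply, smul_eq_mul,
    Finset.sum_mul]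
  exact Finset.sum_congr rfl fun k _ => by ring

private lemma symm_dot (A : Matrix (Fin 3) (Fin 3) ℝ) (hA : A.IsSymm) (x y : Fin 3 → ℝ) :
    x ⬝ᵥ A.mulVec y = y ⬝ᵥ A.mulVec x := by
  rw [Matrix.dotProduct_mulVec, ← Matrix.mulVec_transpose, hA.eq, dotProduct_comm]

/-- Shear stress component `T_{ζη} = b·(T n)` for the Cauchy stress
`T = −p I + 2W₁ B − 2W₂ B⁻¹` of the motion. -/
theorem shear_stress_b_component
    (Bbar : Matrix (Fin 3) (Fin 3) ℝ) (hB : Bbar.IsSymm)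
    (hBinv : IsUnit Bbar.det)
    (n a b : Fin 3 → ℝ)
    (hnn : n ⬝ᵥ n = 1) (haa : a ⬝ᵥ a = 1) (hbb : b ⬝ᵥ b = 1)
    (hna : n ⬝ᵥ a = 0) (hnb : n ⬝ᵥ b = 0) (hab : a ⬝ᵥ b = 0)
    (f' g' p W₁ W₂ : ℝ)
    (B : Matrix (Fin 3) (Fin 3) ℝ)
    (hBdef : B = (1 + f' • vecMulVec a n + g' • vecMulVec b n) * Bbar *
      (1 + f' • vecMulVec n a + g' • vecMulVec n b))
    (T : Matrix (Fin 3) (Fin 3) ℝ)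
    (hT : T = (-p) • (1 : Matrix (Fin 3) (Fin 3) ℝ) + (2 * W₁) • B - (2 * W₂) • B⁻¹) :
    b ⬝ᵥ T.mulVec n =
      2 * W₁ * ((n ⬝ᵥ Bbar.mulVec b) + g' * (n ⬝ᵥ Bbar.mulVec n))
      - 2 * W₂ * ((n ⬝ᵥ Bbar⁻¹.mulVec b) - f' * (b ⬝ᵥ Bbar⁻¹.mulVec a)
          - g' * (b ⬝ᵥ Bbar⁻¹.mulVec b)) := by
  have han : a ⬝ᵥ n = 0 := by rw [dotProduct_comm]; exact hna
  have hbn : b ⬝ᵥ n = 0 := by rw [dotProduct_comm]; exact hnb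
  have hba : b ⬝ᵥ a = 0 := by rw [dotProduct_comm]; exact hab
  set M : Matrix (Fin 3) (Fin 3) ℝ := 1 + f' • vecMulVec a n + g' • vecMulVec b n with hM
  set P : Matrix (Fin 3) (Fin 3) ℝ := 1 + f' • vecMulVec n a + g' • vecMulVec n b with hP
  set M' : Matrix (Fin 3) (Fin 3) ℝ := 1 - f' • vecMulVec a n - g' • vecMulVec b n with hM'
  set P' : Matrix (Fin 3) (Fin 3) ℝ := 1 - f' • vecMulVec n a - g' • vecMulVec n b with hP'
  have hMM' : M * M' = 1 := by
    rw [hM, hM']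
    simp only [mul_sub, mul_add, add_mul, sub_mul, Matrix.smul_mul, Matrix.mul_smul,
      Matrix.one_mul, Matrix.mul_one, vvmul, hna, hnb]
    simp only [zero_smul, smul_zero, sub_zero]
    abel
  have hPP' : P * P' = 1 := by
    rw [hP, hP']
    simp only [mul_sub, mul_add, add_mul, sub_mul, Matrix.smul_mul, Matrix.mul_smul,
      Matrix.one_mul, Matrix.mul_one, vvmul, han, hbn]
    simp only [zero_smul, smul_zero, sub_zero]
    abel
  have hBBinv : Bbar * Bbar⁻¹ = 1 := Matrix.mul_nonsing_inv _ hBinv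
  have hBinvC : B⁻¹ = P' * Bbar⁻¹ * M' := by
    apply Matrix.inv_eq_right_inv
    rw [hBdef]
    have h1 : M * Bbar * P * (P' * Bbar⁻¹ * M') = M * ((Bbar * (P * P')) * (Bbar⁻¹ * M')) := by
      simp only [Matrix.mul_assoc]
    rw [h1, hPP', Matrix.mul_one, ← Matrix.mul_assoc Bbar, hBBinv, Matrix.one_mul, hMM']
  have hBinvSymm : (Bbar⁻¹).IsSymm := by
    unfold Matrix.IsSymm
    rw [Matrix.transpose_nonsing_inv, hB.eq]
  -- compute B.mulVec n
  have hPn : P.mulVec n = n := by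
    rw [hP]
    simp [Matrix.add_mulVec, Matrix.smul_mulVec, vvmulVec, han, hbn]
  have hBn : B.mulVec n = Bbar.mulVec n + (f' * (n ⬝ᵥ Bbar.mulVec n)) • a
      + (g' * (n ⬝ᵥ Bbar.mulVec n)) • b := by
    rw [hBdef, ← Matrix.mulVec_mulVec, hPn, ← Matrix.mulVec_mulVec, hM]
    simp only [Matrix.add_mulVec, Matrix.one_mulVec, Matrix.smul_mulVec, vvmulVec,
      smul_smul]
  have hbBn : b ⬝ᵥ B.mulVec n = (n ⬝ᵥ Bbar.mulVec b) + g' * (n ⬝ᵥ Bbar.mulVec n) := by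
    rw [hBn, symm_dot Bbar hB n b]
    simp only [dotProduct_add, dotProduct_smul, smul_eq_mul, hba, hbb,
      symm_dot Bbar hB b n, mul_zero, mul_one, add_zero]
  -- compute B⁻¹.mulVec n
  have hM'n : M'.mulVec n = n - f' • a - g' • b := by
    rw [hM']
    simp only [Matrix.sub_mulVec, Matrix.one_mulVec, Matrix.smul_mulVec, vvmulVec, hnn,
      one_smul, smul_smul, mul_one]
  have hbBinvn : b ⬝ᵥ B⁻¹.mulVec n =
      (n ⬝ᵥ Bbar⁻¹.mulVec b) - f' * (b ⬝ᵥ Bbar⁻¹.mulVec a) - g' * (b ⬝ᵥ Bbar⁻¹.mulVec b) := by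
    have step1 : b ⬝ᵥ B⁻¹.mulVec n = b ⬝ᵥ Bbar⁻¹.mulVec (n - f' • a - g' • b) := by
      rw [hBinvC, ← Matrix.mulVec_mulVec, ← Matrix.mulVec_mulVec, hM'n, hP']
      simp only [Matrix.sub_mulVec, Matrix.one_mulVec, Matrix.smul_mulVec, vvmulVec,
        smul_smul, dotProduct_sub, dotProduct_smul, smul_eq_mul, hbn, mul_zero,
        sub_zero]
    rw [step1, Matrix.mulVec_sub, Matrix.mulVec_sub, Matrix.mulVec_smul, Matrix.mulVec_smul,
      dotProduct_sub, dotProduct_sub, dotProduct_smul, dotProduct_smul,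
      symm_dot Bbar⁻¹ hBinvSymm b n]
    simp only [smul_eq_mul]
  rw [hT]
  simp only [Matrix.add_mulVec, Matrix.sub_mulVec, Matrix.smul_mulVec,
    Matrix.one_mulVec, dotProduct_add, dotProduct_sub, dotProduct_smul,
    smul_eq_mul, hbn, hbBn, hbBinvn]
  ring
end

section
/- Let B̄ be a symmetric positive-definite real 3×3 matrix, let (n, a, b) be an orthonormal triad of vectors in ℝ³, and let C > 0, E ≥ 0 be real numbers. Then the symmetric 2×2 matrix M with entries M₁₁ = C n·(B̄n) + E a·(B̄⁻¹a), M₂₂ = C n·(B̄n) + E b·(B̄⁻¹b), M₁₂ = M₂₁ = E a·(B̄⁻¹b) is positive definite; in particular both of its eigenvalues are positive, so both squared wave speeds of the two superposed shear waves in a deformed Mooney–Rivlin material are positive. -/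
/-!
For `x ∈ ℝ²` the quadratic form of the acoustic matrix is
`C (n·B̄n) |x|² + E v·(B̄⁻¹v)` with `v = x₀ a + x₁ b`: the matrix is a positive multiple of the
identity plus `E` times the Gram matrix of `a, b` for the positive semidefinite form `B̄⁻¹`.
-/

open Matrix

namespace Matrix

variable {m n R : Type*} [Fintype m] [Fintype n] [CommRing R] [PartialOrder R] [StarRing R]

theorem PosSemidef.gram_dotProduct_mulVec {A : Matrix n n R} (hA : A.PosSemidef)
    (u : m → n → R) : (of fun i j => star (u i) ⬝ᵥ A *ᵥ u j).PosSemidef := by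
  convert hA.conjTranspose_mul_mul_same (of u)ᵀ using 1
  ext i j
  simp only [of_apply, mul_apply, conjTranspose_apply, transpose_apply, dotProduct, mulVec,
    Finset.mul_sum, Finset.sum_mul, mul_assoc]
  exact Finset.sum_comm

end Matrix

theorem acoustic_matrix_posDef_general
    (Bbar : Matrix (Fin 3) (Fin 3) ℝ) (hB : Bbar.PosDef)
    (n a b : Fin 3 → ℝ)
    (hnn : n ⬝ᵥ n = 1)
    (C E : ℝ) (hC : 0 < C) (hE : 0 ≤ E) :
    (!![C * (n ⬝ᵥ Bbar.mulVec n) + E * (a ⬝ᵥ Bbar⁻¹.mulVec a),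
        E * (a ⬝ᵥ Bbar⁻¹.mulVec b);
        E * (a ⬝ᵥ Bbar⁻¹.mulVec b),
        C * (n ⬝ᵥ Bbar.mulVec n) + E * (b ⬝ᵥ Bbar⁻¹.mulVec b)] :
      Matrix (Fin 2) (Fin 2) ℝ).PosDef := by
  have hn : n ≠ 0 := by rintro rfl; simp at hnn
  have hnBn : 0 < n ⬝ᵥ Bbar *ᵥ n := by simpa using hB.dotProduct_mulVec_pos hn
  have hBinv : Bbar⁻¹.PosSemidef := hB.inv.posSemidef
  have hsymm : b ⬝ᵥ Bbar⁻¹ *ᵥ a = a ⬝ᵥ Bbar⁻¹ *ᵥ b := by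
    rw [dotProduct_mulVec, ← mulVec_transpose, ← conjTranspose_eq_transpose_of_trivial,
      hBinv.isHermitian.eq, dotProduct_comm]
  convert ((PosDef.one (n := Fin 2) (R := ℝ)).smul (mul_pos hC hnBn)).add_posSemidef
    ((hBinv.gram_dotProduct_mulVec ![a, b]).smul hE) using 1
  ext i j
  fin_cases i <;> fin_cases j <;> simp [hsymm]

/-- The acoustic matrix of the coupled shear-wave system in a deformed
Mooney–Rivlin material is positive definite, hence both squared wave speeds
are positive. -/
theorem acoustic_matrix_posDef
    (Bbar : Matrix (Fin 3) (Fin 3) ℝ) (hB : Bbar.PosDef)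
    (n a b : Fin 3 → ℝ)
    (hnn : n ⬝ᵥ n = 1) (haa : a ⬝ᵥ a = 1) (hbb : b ⬝ᵥ b = 1)
    (hna : n ⬝ᵥ a = 0) (hnb : n ⬝ᵥ b = 0) (hab : a ⬝ᵥ b = 0)
    (C E : ℝ) (hC : 0 < C) (hE : 0 ≤ E) :
    (!![C * (n ⬝ᵥ Bbar.mulVec n) + E * (a ⬝ᵥ Bbar⁻¹.mulVec a),
        E * (a ⬝ᵥ Bbar⁻¹.mulVec b);
        E * (a ⬝ᵥ Bbar⁻¹.mulVec b),
        C * (n ⬝ᵥ Bbar.mulVec n) + E * (b ⬝ᵥ Bbar⁻¹.mulVec b)] :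
      Matrix (Fin 2) (Fin 2) ℝ).PosDef :=
  acoustic_matrix_posDef_general Bbar hB n a b hnn C E hC hE
end

section
/- Let ρ > 0 and λ > 0 be real numbers and set c = √(λ/ρ). If u : ℝ × ℝ → ℝ is twice continuously differentiable and satisfies ρ ∂²u/∂t² = λ ∂²u/∂η² for all (η, t) ∈ ℝ², then there exist twice continuously differentiable functions u₋, u₊ : ℝ → ℝ such that u(η, t) = u₋(η − c t) + u₊(η + c t) for all (η, t); i.e. every solution of the wave equation is a superposition of two traveling waves of permanent form. -/
/-!
In the characteristic coordinates `a = η - c t`, `b = η + c t` we have `(η, t) = a • α + b • β`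
with `α = (1/2, -1/(2c))` and `β = (1/2, 1/(2c))`. By symmetry of the second derivative,
`D²u(α, β) = (u_ηη - u_tt / c²) / 4`, which vanishes for a solution of the wave equation.
A `C²` function whose mixed second derivative along `α, β` vanishes splits as
`u (a • α + b • β) = u (a • α) + u (b • β) - u 0`: integrate once in `a`, then once in `b`.
-/

/-- Second partial derivative of `u(η, t)` with respect to `η` (first argument). -/
noncomputable def d2eta (u : ℝ × ℝ → ℝ) (η t : ℝ) : ℝ :=
  deriv (fun s => deriv (fun s' => u (s', t)) s) η

/-- Second partial derivative of `u(η, t)` with respect to `t` (second argument). -/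
noncomputable def d2t (u : ℝ × ℝ → ℝ) (η t : ℝ) : ℝ :=
  deriv (fun s => deriv (fun s' => u (η, s')) s) t

section SecondDerivative

variable {E F : Type*} [NormedAddCommGroup E] [NormedSpace ℝ E]
  [NormedAddCommGroup F] [NormedSpace ℝ F] {u : E → F}

theorem hasDerivAt_fderiv_apply_comp {γ : ℝ → E} {d : E} {s : ℝ}
    (hu : DifferentiableAt ℝ (fderiv ℝ u) (γ s)) (hγ : HasDerivAt γ d s) (z : E) :
    HasDerivAt (fun x => fderiv ℝ u (γ x) z) (fderiv ℝ (fderiv ℝ u) (γ s) d z) s :=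
  ((ContinuousLinearMap.apply ℝ F z).hasFDerivAt.comp (γ s) hu.hasFDerivAt).comp_hasDerivAt s hγ

theorem deriv_deriv_comp_eq_fderiv_fderiv (hu : ContDiff ℝ 2 u) {γ : ℝ → E} {d : E}
    (hγ : ∀ s, HasDerivAt γ d s) (s : ℝ) :
    deriv (deriv (u ∘ γ)) s = fderiv ℝ (fderiv ℝ u) (γ s) d d := by
  have hderiv : deriv (u ∘ γ) = fun x => fderiv ℝ u (γ x) d := funext fun x =>
    (((hu.differentiable two_ne_zero) (γ x)).hasFDerivAt.comp_hasDerivAt x (hγ x)).deriv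
  rw [hderiv]
  exact (hasDerivAt_fderiv_apply_comp
    ((hu.fderiv_right (m := 1) le_rfl).differentiable one_ne_zero (γ s)) (hγ s) d).deriv

theorem eq_add_of_fderiv_fderiv_apply_eq_zero (hu : ContDiff ℝ 2 u) {α β : E}
    (h : ∀ p, fderiv ℝ (fderiv ℝ u) p α β = 0) (a b : ℝ) :
    u (a • α + b • β) = u (a • α) + u (b • β) - u 0 := by
  have hline : ∀ (y : ℝ) (v w : E), HasDerivAt (fun x : ℝ => v + x • w) w y := fun y v w => by
    simpa using ((hasDerivAt_id y).smul_const w).const_add v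
  have hdu : Differentiable ℝ u := hu.differentiable two_ne_zero
  have hd2u : Differentiable ℝ (fderiv ℝ u) :=
    (hu.fderiv_right (m := 1) le_rfl).differentiable one_ne_zero
  have hslope : ∀ y : ℝ, fderiv ℝ u (a • α + y • β) β = fderiv ℝ u (y • β) β := by
    intro y
    have hslope_zero : ∀ x, HasDerivAt (fun x : ℝ => fderiv ℝ u (y • β + x • α) β) 0 x :=
      fun x => by
        simpa [h] using hasDerivAt_fderiv_apply_comp (hd2u _) (hline x (y • β) α) β
    simpa [add_comm] using is_const_of_deriv_eq_zero (fun x => (hslope_zero x).differentiableAt)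
      (fun x => (hslope_zero x).deriv) a 0
  have hzero : ∀ y, HasDerivAt (fun y : ℝ => u (a • α + y • β) - u (y • β)) 0 y := fun y => by
    have h1 := (hdu _).hasFDerivAt.comp_hasDerivAt y (hline y (a • α) β)
    have h2 := (hdu _).hasFDerivAt.comp_hasDerivAt y (by simpa using hline y 0 β)
    have h := h1.sub h2
    rw [hslope, sub_self] at h
    exact h
  have := is_const_of_deriv_eq_zero (fun y => (hzero y).differentiableAt)
      (fun y => (hzero y).deriv) b 0
  simp only [zero_smul, add_zero] at this
  rw [sub_eq_iff_eq_add.mp this]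
  abel

end SecondDerivative

theorem bilin_apply_reflect_of_symm {F : Type*} [NormedAddCommGroup F] [NormedSpace ℝ F]
    (B : ℝ × ℝ →L[ℝ] ℝ × ℝ →L[ℝ] F) (hB : B (1, 0) (0, 1) = B (0, 1) (1, 0)) (x y : ℝ) :
    B (x, -y) (x, y) = x ^ 2 • B (1, 0) (1, 0) - y ^ 2 • B (0, 1) (0, 1) := by
  have hxy : ∀ x y : ℝ, ((x, y) : ℝ × ℝ) = x • (1, 0) + y • (0, 1) := fun x y => by simp
  rw [hxy x, hxy x]
  simp only [map_add, map_smul, add_apply, smul_apply, hB]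
  module

theorem d2eta_eq_fderiv_fderiv {u : ℝ × ℝ → ℝ} (hu : ContDiff ℝ 2 u) (η t : ℝ) :
    d2eta u η t = fderiv ℝ (fderiv ℝ u) (η, t) (1, 0) (1, 0) :=
  deriv_deriv_comp_eq_fderiv_fderiv hu (fun s => (hasDerivAt_id s).prodMk (hasDerivAt_const s t)) η

theorem d2t_eq_fderiv_fderiv {u : ℝ × ℝ → ℝ} (hu : ContDiff ℝ 2 u) (η t : ℝ) :
    d2t u η t = fderiv ℝ (fderiv ℝ u) (η, t) (0, 1) (0, 1) :=
  deriv_deriv_comp_eq_fderiv_fderiv hu (fun s => (hasDerivAt_const s η).prodMk (hasDerivAt_id s)) t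

theorem fderiv_fderiv_apply_characteristics_eq_zero {ρ lam c : ℝ} (hρ : ρ ≠ 0) (hc : c ≠ 0)
    (hc2 : c ^ 2 * ρ = lam) {u : ℝ × ℝ → ℝ} (hu : ContDiff ℝ 2 u)
    (heq : ∀ η t : ℝ, ρ * d2t u η t = lam * d2eta u η t) (p : ℝ × ℝ) :
    fderiv ℝ (fderiv ℝ u) p (1 / 2, -(1 / (2 * c))) (1 / 2, 1 / (2 * c)) = 0 := by
  have hwave := heq p.1 p.2
  rw [d2t_eq_fderiv_fderiv hu, d2eta_eq_fderiv_fderiv hu, ← hc2] at hwave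
  rw [bilin_apply_reflect_of_symm _ (hu.contDiffAt.isSymmSndFDerivAt (by simp) _ _)]
  set B := fderiv ℝ (fderiv ℝ u) p
  have hB : B (0, 1) (0, 1) = c ^ 2 * B (1, 0) (1, 0) := mul_left_cancel₀ hρ (by linarith)
  rw [smul_eq_mul, smul_eq_mul, hB]
  field_simp
  ring

/-- d'Alembert: every solution of the wave equation `ρ u_tt = λ u_ηη` is a
superposition of two travelling waves of permanent form. -/
theorem wave_equation_solution_is_superposition
    (ρ lam : ℝ) (hρ : 0 < ρ) (hlam : 0 < lam)
    (c : ℝ) (hc : c = Real.sqrt (lam / ρ))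
    (u : ℝ × ℝ → ℝ) (hu : ContDiff ℝ 2 u)
    (heq : ∀ η t : ℝ, ρ * d2t u η t = lam * d2eta u η t) :
    ∃ uminus uplus : ℝ → ℝ, ContDiff ℝ 2 uminus ∧ ContDiff ℝ 2 uplus ∧
      ∀ η t : ℝ, u (η, t) = uminus (η - c * t) + uplus (η + c * t) := by
  have hc0 : c ≠ 0 := hc ▸ (Real.sqrt_pos.2 (div_pos hlam hρ)).ne'
  have hc2 : c ^ 2 * ρ = lam := by
    rw [hc, Real.sq_sqrt (div_pos hlam hρ).le, div_mul_cancel₀ _ hρ.ne']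
  set α : ℝ × ℝ := (1 / 2, -(1 / (2 * c)))
  set β : ℝ × ℝ := (1 / 2, 1 / (2 * c))
  have hsplit := eq_add_of_fderiv_fderiv_apply_eq_zero hu
    (fderiv_fderiv_apply_characteristics_eq_zero hρ.ne' hc0 hc2 hu heq)
  refine ⟨fun x => u (x • α) - u 0, fun x => u (x • β), by fun_prop, by fun_prop, fun η t => ?_⟩
  have hpt : (η - c * t) • α + (η + c * t) • β = (η, t) := by
    ext <;> simp [α, β] <;> field_simp <;> ring
  rw [← hpt, hsplit]
  ring
end

section
/- Let a, b, P, F, G be real numbers, set Λ = 2aF + 2bG + P(F² + G²), u = a + PF, v = b + PG, and let A be the 2×2 matrix with entries A₁₁ = PΛ + 2u², A₂₂ = PΛ + 2v², A₁₂ = A₂₁ = 2uv. Then u² + v² = a² + b² + PΛ, and A mulVec (v, −u) = (PΛ) • (v, −u) and A mulVec (u, v) = (2(a² + b²) + 3PΛ) • (u, v); that is, A has eigenvalues λ₁ = PΛ and λ₂ = 2(a² + b²) + 3PΛ with eigenvectors (v, −u) and (u, v) respectively. -/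
open Matrix

/-- Eigenvalues and eigenvectors of the coefficient matrix of the asymptotic
system of coupled equations governing the wave amplitudes `F, G` when the
propagation direction is close to a principal direction of pre-deformation. -/
theorem near_principal_axis_eigenpairs
    (a b P F G : ℝ)
    (Λ : ℝ) (hΛ : Λ = 2 * a * F + 2 * b * G + P * (F ^ 2 + G ^ 2))
    (u v : ℝ) (hu : u = a + P * F) (hv : v = b + P * G)
    (A : Matrix (Fin 2) (Fin 2) ℝ)
    (hA : A = !![P * Λ + 2 * u ^ 2, 2 * u * v;
                 2 * u * v, P * Λ + 2 * v ^ 2]) :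
    u ^ 2 + v ^ 2 = a ^ 2 + b ^ 2 + P * Λ ∧
    A.mulVec ![v, -u] = (P * Λ) • ![v, -u] ∧
    A.mulVec ![u, v] = (2 * (a ^ 2 + b ^ 2) + 3 * P * Λ) • ![u, v] := by
  have key : u ^ 2 + v ^ 2 = a ^ 2 + b ^ 2 + P * Λ := by
    subst hΛ hu hv; ring
  refine ⟨key, ?_, ?_⟩ <;>
  · subst hA
    funext i
    fin_cases i <;>
      { simp [mulVec, dotProduct, Fin.sum_univ_two]; subst hΛ hu hv; ring }
end
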